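/- Let a < b < c < d be real numbers and define f : ℝ × ℝ → ℝ² by f(u,v) = ((u+v)/2, (uv+1)/2) (so that f(u,v) is the circumcenter of the triangle with vertices (0,1), (u,0), (v,0) whenever u ≠ v). Then the image of the rectangle [a,b] × [c,d] under f equals the filled quadrilateral with vertices f(a,c), f(a,d), f(b,d), f(b,c), i.e. f([a,b] × [c,d]) is equal to the convex hull of the four points {f(a,c), f(a,d), f(b,d), f(b,c)}. -/

import Mathlib

open Real

/-- The circumcenter of the triangle with vertices (0,1), (u,0), (v,0),
as a point of the Euclidean plane. -/
noncomputable def qf (u v : ℝ) : EuclideanSpace ℝ (Fin 2) := WithLp.toLp 2 ![(u + v) / 2, (u * v + 1) / 2]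

/-! `qf u v` is affine in each variable separately, so it maps the rectangle into the hull of the
images of its corners. Conversely `p = qf u v` exactly when `u` and `v` are the roots of
`z ↦ z² - 2 p₀ z + 2 p₁ - 1`. Since this quadratic is affine in `p` for fixed `z`, the four sign
conditions it satisfies at `a, b, c, d` on the corners persist on their convex hull, and they
force a real root in `[a, b]` and another in `[c, d]`. -/

open Set

@[simp]
lemma qf_apply_zero (u v : ℝ) : qf u v 0 = (u + v) / 2 := rfl

@[simp]
lemma qf_apply_one (u v : ℝ) : qf u v 1 = (u * v + 1) / 2 := rfl

noncomputable def qfQuadratic (p : EuclideanSpace ℝ (Fin 2)) (z : ℝ) : ℝ :=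
  z ^ 2 - 2 * p 0 * z + 2 * p 1 - 1

lemma qfQuadratic_qf (u v z : ℝ) : qfQuadratic (qf u v) z = (z - u) * (z - v) := by
  simp only [qfQuadratic, qf_apply_zero, qf_apply_one]
  ring

lemma qfQuadratic_add_smul (p q : EuclideanSpace ℝ (Fin 2)) (z : ℝ) {s t : ℝ} (hst : s + t = 1) :
    qfQuadratic (s • p + t • q) z = s * qfQuadratic p z + t * qfQuadratic q z := by
  simp only [qfQuadratic, PiLp.add_apply, PiLp.smul_apply, smul_eq_mul]
  linear_combination (1 - z ^ 2) * hst

lemma qf_mem_segment_left {a b u : ℝ} (c : ℝ) (hu : u ∈ segment ℝ a b) :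
    qf u c ∈ segment ℝ (qf a c) (qf b c) := by
  obtain ⟨s, t, hs, ht, hst, rfl⟩ := hu
  refine ⟨s, t, hs, ht, hst, ?_⟩
  refine PiLp.ext (Fin.forall_fin_two.2 ⟨?_, ?_⟩)
  · simp only [qf_apply_zero, PiLp.add_apply, PiLp.smul_apply, smul_eq_mul]
    linear_combination (c / 2) * hst
  · simp only [qf_apply_one, PiLp.add_apply, PiLp.smul_apply, smul_eq_mul]
    linear_combination (1 / 2 : ℝ) * hst

lemma qf_mem_segment_right (u : ℝ) {c d v : ℝ} (hv : v ∈ segment ℝ c d) :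
    qf u v ∈ segment ℝ (qf u c) (qf u d) := by
  obtain ⟨s, t, hs, ht, hst, rfl⟩ := hv
  refine ⟨s, t, hs, ht, hst, ?_⟩
  refine PiLp.ext (Fin.forall_fin_two.2 ⟨?_, ?_⟩)
  · simp only [qf_apply_zero, PiLp.add_apply, PiLp.smul_apply, smul_eq_mul]
    linear_combination (u / 2) * hst
  · simp only [qf_apply_one, PiLp.add_apply, PiLp.smul_apply, smul_eq_mul]
    linear_combination (1 / 2 : ℝ) * hst

lemma qf_mem_convexHull {a b c d u v : ℝ} (hu : u ∈ Icc a b) (hv : v ∈ Icc c d) :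
    qf u v ∈ convexHull ℝ {qf a c, qf a d, qf b d, qf b c} := by
  set H := convexHull ℝ ({qf a c, qf a d, qf b d, qf b c} : Set (EuclideanSpace ℝ (Fin 2)))
  have hconv : Convex ℝ H := convex_convexHull ℝ _
  have hu' : u ∈ segment ℝ a b := Icc_subset_segment hu
  have huc : qf u c ∈ H := hconv.segment_subset (subset_convexHull ℝ _ (by simp))
    (subset_convexHull ℝ _ (by simp)) (qf_mem_segment_left c hu')
  have hud : qf u d ∈ H := hconv.segment_subset (subset_convexHull ℝ _ (by simp))
    (subset_convexHull ℝ _ (by simp)) (qf_mem_segment_left d hu')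
  exact hconv.segment_subset huc hud (qf_mem_segment_right u (Icc_subset_segment hv))

def qfRegion (a b c d : ℝ) : Set (EuclideanSpace ℝ (Fin 2)) :=
  {p | 0 ≤ qfQuadratic p a ∧ qfQuadratic p b ≤ 0 ∧ qfQuadratic p c ≤ 0 ∧ 0 ≤ qfQuadratic p d}

lemma convex_qfRegion (a b c d : ℝ) : Convex ℝ (qfRegion a b c d) := by
  rintro p ⟨hpa, hpb, hpc, hpd⟩ q ⟨hqa, hqb, hqc, hqd⟩ s t hs ht hst
  simp only [qfRegion, mem_ofPred_eq, qfQuadratic_add_smul p q _ hst]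
  exact ⟨add_nonneg (mul_nonneg hs hpa) (mul_nonneg ht hqa),
    add_nonpos (mul_nonpos_of_nonneg_of_nonpos hs hpb) (mul_nonpos_of_nonneg_of_nonpos ht hqb),
    add_nonpos (mul_nonpos_of_nonneg_of_nonpos hs hpc) (mul_nonpos_of_nonneg_of_nonpos ht hqc),
    add_nonneg (mul_nonneg hs hpd) (mul_nonneg ht hqd)⟩

lemma qf_mem_qfRegion {a b c d u v : ℝ} (hbc : b ≤ c) (hu : u ∈ Icc a b) (hv : v ∈ Icc c d) :
    qf u v ∈ qfRegion a b c d := by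
  obtain ⟨hau, hub⟩ := hu
  obtain ⟨hcv, hvd⟩ := hv
  simp only [qfRegion, mem_ofPred_eq, qfQuadratic_qf]
  refine ⟨?_, ?_, ?_, ?_⟩ <;> nlinarith

lemma exists_qf_eq_of_qfQuadratic_nonpos {p : EuclideanSpace ℝ (Fin 2)} {z : ℝ}
    (hz : qfQuadratic p z ≤ 0) : ∃ u v, u ≤ v ∧ qf u v = p := by
  have hdisc : 0 ≤ p 0 ^ 2 - (2 * p 1 - 1) := by
    unfold qfQuadratic at hz
    nlinarith [sq_nonneg (z - p 0)]
  set r := √(p 0 ^ 2 - (2 * p 1 - 1))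
  have hr : r ^ 2 = p 0 ^ 2 - (2 * p 1 - 1) := sq_sqrt hdisc
  refine ⟨p 0 - r, p 0 + r, by linarith [sqrt_nonneg (p 0 ^ 2 - (2 * p 1 - 1))], ?_⟩
  refine PiLp.ext (Fin.forall_fin_two.2 ⟨?_, ?_⟩)
  · simp only [qf_apply_zero]
    ring
  · simp only [qf_apply_one]
    linear_combination (-1 / 2 : ℝ) * hr

lemma mem_Icc_of_sign_conditions {a b c d u v : ℝ} (hab : a < b) (hbc : b < c) (hcd : c < d)
    (huv : u ≤ v) (ha : 0 ≤ (a - u) * (a - v)) (hb : (b - u) * (b - v) ≤ 0)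
    (hc : (c - u) * (c - v) ≤ 0) (hd : 0 ≤ (d - u) * (d - v)) :
    u ∈ Icc a b ∧ v ∈ Icc c d := by
  have hub : u ≤ b := by nlinarith
  have hcv : c ≤ v := by nlinarith
  refine ⟨⟨?_, hub⟩, ⟨hcv, ?_⟩⟩ <;> nlinarith

lemma qfRegion_subset_image {a b c d : ℝ} (hab : a < b) (hbc : b < c) (hcd : c < d) :
    qfRegion a b c d ⊆ (fun p : ℝ × ℝ => qf p.1 p.2) '' (Icc a b ×ˢ Icc c d) := by
  intro p hp
  obtain ⟨u, v, huv, rfl⟩ := exists_qf_eq_of_qfQuadratic_nonpos hp.2.1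
  simp only [qfRegion, mem_ofPred_eq, qfQuadratic_qf] at hp
  obtain ⟨hu, hv⟩ := mem_Icc_of_sign_conditions hab hbc hcd huv hp.1 hp.2.1 hp.2.2.1 hp.2.2.2
  exact ⟨(u, v), ⟨hu, hv⟩, rfl⟩

/-- As u ranges over [a,b] and v over [c,d] (with a < b < c < d), the circumcenter
f(u,v) = ((u+v)/2, (uv+1)/2) fills exactly the quadrilateral with vertices
f(a,c), f(a,d), f(b,d), f(b,c). -/
theorem quadrilateral_image (a b c d : ℝ) (hab : a < b) (hbc : b < c) (hcd : c < d) :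
    (fun p : ℝ × ℝ => qf p.1 p.2) '' (Set.Icc a b ×ˢ Set.Icc c d) =
      convexHull ℝ ({qf a c, qf a d, qf b d, qf b c} : Set (EuclideanSpace ℝ (Fin 2))) := by
  refine Subset.antisymm ?_ (Subset.trans ?_ (qfRegion_subset_image hab hbc hcd))
  · rintro _ ⟨⟨u, v⟩, ⟨hu, hv⟩, rfl⟩
    exact qf_mem_convexHull hu hv
  · refine convexHull_min ?_ (convex_qfRegion a b c d)
    have ha : a ∈ Icc a b := left_mem_Icc.2 hab.le
    have hb : b ∈ Icc a b := right_mem_Icc.2 hab.le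
    have hc : c ∈ Icc c d := left_mem_Icc.2 hcd.le
    have hd : d ∈ Icc c d := right_mem_Icc.2 hcd.le
    simp only [insert_subset_iff, singleton_subset_iff]
    exact ⟨qf_mem_qfRegion hbc.le ha hc, qf_mem_qfRegion hbc.le ha hd,
      qf_mem_qfRegion hbc.le hb hd, qf_mem_qfRegion hbc.le hb hc⟩
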